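/- arXiv:2203.05302 — 2 statements merged into one kernel-verified Lean document; each statement's English description precedes it below -/
import Mathlib

section
/- For every A > 0, every λ ∈ ℂ ∖ Σ_A, and every real number m, writing U := (1/2)·[[−1, λm],[−λm, 1]] and Û_A := (λ(m−A)/(2A·k_A(λ)))·σ₂ + ((m−A)/(2i·A²·k_A(λ)))·σ₃, one has the matrix identity D_A(λ)·U·E_A(λ) = −(i·k_A(λ)·m/2)·σ₃ + Û_A. (Consequently, if Φ solves Φ_x = UΦ, then Φ̂ := D_A(λ)Φ solves the transformed equation Φ̂_x + (i·k_A(λ)·m/2)·σ₃·Φ̂ = Û_A·Φ̂.) -/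
open Complex Matrix MeasureTheory Filter

noncomputable def csqrt (z : ℂ) : ℂ := z ^ (1/2 : ℂ)

noncomputable def sB (w : ℂ) : ℂ := Complex.I * csqrt (-w)

def SigmaSet (A : ℝ) : Set ℂ := Complex.ofReal '' (Set.Iic (-(1/A)) ∪ Set.Ici (1/A))

noncomputable def kA (A : ℝ) (l : ℂ) : ℂ := Complex.I * csqrt (1/(A:ℂ)^2 - l^2)

noncomputable def DA (A : ℝ) (l : ℂ) : Matrix (Fin 2) (Fin 2) ℂ :=
  (((Real.sqrt 2 : ℝ) : ℂ)⁻¹ * sB (1/(Complex.I * (A:ℂ) * kA A l) - 1)) •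
    !![l * (A:ℂ) / (1 - Complex.I * (A:ℂ) * kA A l), -1;
       -1, l * (A:ℂ) / (1 - Complex.I * (A:ℂ) * kA A l)]

noncomputable def EA (A : ℝ) (l : ℂ) : Matrix (Fin 2) (Fin 2) ℂ :=
  (((Real.sqrt 2 : ℝ) : ℂ)⁻¹ * sB (1/(Complex.I * (A:ℂ) * kA A l) - 1)) •
    !![l * (A:ℂ) / (1 - Complex.I * (A:ℂ) * kA A l), 1;
       1, l * (A:ℂ) / (1 - Complex.I * (A:ℂ) * kA A l)]

def sigma1 : Matrix (Fin 2) (Fin 2) ℂ := !![0, 1; 1, 0]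
def sigma2 : Matrix (Fin 2) (Fin 2) ℂ := !![0, -Complex.I; Complex.I, 0]
def sigma3 : Matrix (Fin 2) (Fin 2) ℂ := !![1, 0; 0, -1]

/-!
Write `D_A = c (a - σ₁)` and `E_A = c (a + σ₁)` with `a = λA / (1 - iAk)`, and
`U = -σ₃/2 + (iλm/2) σ₂`. Because `σ₁` anticommutes with `σ₂` and `σ₃`, the product
`(a - σ₁) U (a + σ₁)` stays in the span of `σ₃, σ₂`, with coefficients involving `a² + 1`
and `a`.
The relation `(Ak)² = (Aλ)² - 1` gives `a² + 1 = 2 / (1 - iAk)`, and `c² = (1 - iAk) / (2iAk)`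
cancels the remaining factor `1 - iAk`.
-/

lemma csqrt_sq (z : ℂ) : csqrt z ^ 2 = z := by
  rcases eq_or_ne z 0 with rfl | hz
  · simp [csqrt]
  · rw [csqrt, sq, ← Complex.cpow_add _ _ hz]
    norm_num

lemma csqrt_ofReal_sq {x : ℝ} (hx : 0 ≤ x) : csqrt ((x:ℂ) ^ 2) = x := by
  rw [csqrt, ← Complex.ofReal_pow, show (1/2 : ℂ) = ((1/2 : ℝ) : ℂ) by norm_num,
    ← Complex.ofReal_cpow (by positivity), ← Real.sqrt_eq_rpow, Real.sqrt_sq hx]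

lemma sB_sq (w : ℂ) : sB w ^ 2 = w := by
  rw [sB, mul_pow, csqrt_sq, Complex.I_sq]
  ring

lemma kA_sq (A : ℝ) (l : ℂ) : kA A l ^ 2 = l ^ 2 - 1 / (A:ℂ) ^ 2 := by
  rw [kA, mul_pow, csqrt_sq, Complex.I_sq]
  ring

lemma ofReal_sq_mul_kA_sq (A : ℝ) (l : ℂ) (hA : (A:ℂ) ≠ 0) :
    (A:ℂ) ^ 2 * kA A l ^ 2 = (A:ℂ) ^ 2 * l ^ 2 - 1 := by
  rw [kA_sq]
  field_simp

lemma kA_ne_zero {A : ℝ} {l : ℂ} (hl : l ∉ SigmaSet A) : kA A l ≠ 0 := by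
  intro hk
  have hroots : (l - 1 / (A:ℂ)) * (l + 1 / (A:ℂ)) = 0 := by
    linear_combination (-1 : ℂ) * kA_sq A l + kA A l * hk
  apply hl
  rcases mul_eq_zero.mp hroots with h | h
  · exact ⟨1 / A, Or.inr Set.self_mem_Ici, by push_cast; linear_combination -h⟩
  · exact ⟨-(1 / A), Or.inl Set.self_mem_Iic, by push_cast; linear_combination -h⟩

lemma kA_zero {A : ℝ} (hA : 0 < A) : kA A 0 = Complex.I / A := by
  rw [kA, show 1 / (A:ℂ) ^ 2 - 0 ^ 2 = ((1 / A : ℝ) : ℂ) ^ 2 by push_cast; ring,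
    csqrt_ofReal_sq (by positivity)]
  push_cast
  ring

/-- `1 - i A k_A(λ)` vanishes only if `(A k_A(λ))² = -1`, i.e. `λ = 0`, where `k_A(0) = i/A`
makes it equal to `2`. -/
lemma one_sub_I_mul_kA_ne_zero {A : ℝ} (hA : 0 < A) (l : ℂ) :
    1 - Complex.I * (A:ℂ) * kA A l ≠ 0 := by
  have hA0 : (A:ℂ) ≠ 0 := by exact_mod_cast hA.ne'
  intro hd
  have hl : l = 0 := by
    have hsq : (A:ℂ) ^ 2 * kA A l ^ 2 = -1 := by
      linear_combination (1 + Complex.I * A * kA A l) * hd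
        + (A:ℂ) ^ 2 * kA A l ^ 2 * Complex.I_sq
    rw [kA_sq] at hsq
    field_simp at hsq
    simpa [hA0] using (show (A:ℂ) ^ 2 * l ^ 2 = 0 by linear_combination hsq)
  have htwo : 1 - Complex.I * (A:ℂ) * kA A 0 = 2 := by
    rw [kA_zero hA]
    field_simp
    linear_combination -Complex.I_sq
  rw [hl, htwo] at hd
  norm_num at hd

lemma of_diag_sub_sigma1 (a : ℂ) : !![a, -1; -1, a] = a • 1 - sigma1 := by
  ext i j
  fin_cases i <;> fin_cases j <;> simp [sigma1]

lemma of_diag_add_sigma1 (a : ℂ) : !![a, 1; 1, a] = a • 1 + sigma1 := by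
  ext i j
  fin_cases i <;> fin_cases j <;> simp [sigma1]

lemma smul_one_sub_sigma1_mul_mul_smul_one_add_sigma1 (a α β : ℂ) :
    (a • 1 - sigma1) * (α • sigma3 + β • sigma2) * (a • 1 + sigma1)
      = ((a ^ 2 + 1) * α - 2 * Complex.I * a * β) • sigma3
        + ((a ^ 2 + 1) * β + 2 * Complex.I * a * α) • sigma2 := by
  ext i j
  fin_cases i <;> fin_cases j <;>
    simp [sigma1, sigma2, sigma3, Matrix.mul_apply, Fin.sum_univ_two] <;>
    ring_nf <;> simp only [Complex.I_sq] <;> ring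

noncomputable def aA (A : ℝ) (l : ℂ) : ℂ :=
  l * (A:ℂ) / (1 - Complex.I * (A:ℂ) * kA A l)

noncomputable def cA (A : ℝ) (l : ℂ) : ℂ :=
  ((Real.sqrt 2 : ℝ) : ℂ)⁻¹ * sB (1 / (Complex.I * (A:ℂ) * kA A l) - 1)

lemma DA_eq (A : ℝ) (l : ℂ) : DA A l = cA A l • (aA A l • 1 - sigma1) := by
  rw [DA, ← of_diag_sub_sigma1]
  rfl

lemma EA_eq (A : ℝ) (l : ℂ) : EA A l = cA A l • (aA A l • 1 + sigma1) := by
  rw [EA, ← of_diag_add_sigma1]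
  rfl

lemma cA_sq (A : ℝ) (l : ℂ) : cA A l ^ 2 = (1 / (Complex.I * A * kA A l) - 1) / 2 := by
  rw [cA, mul_pow, sB_sq, inv_pow, ← Complex.ofReal_pow, Real.sq_sqrt zero_le_two]
  push_cast
  ring

lemma aA_sq_add_one {A : ℝ} (hA : 0 < A) (l : ℂ) :
    aA A l ^ 2 + 1 = 2 / (1 - Complex.I * A * kA A l) := by
  have hd := one_sub_I_mul_kA_ne_zero hA l
  rw [aA, div_pow, div_add_one (pow_ne_zero 2 hd), div_eq_div_iff (pow_ne_zero 2 hd) hd]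
  linear_combination (1 - Complex.I * A * kA A l) * (-ofReal_sq_mul_kA_sq A l
    (by exact_mod_cast hA.ne') + (A:ℂ) ^ 2 * kA A l ^ 2 * Complex.I_sq)

/-- conjugating U = (1/2)[[−1, λm],[−λm, 1]] by D_A gives
−(i·k_A(λ)·m/2)·σ₃ + Û_A. -/
theorem stmt_2 (A : ℝ) (hA : 0 < A) (l : ℂ) (hl : l ∉ SigmaSet A) (m : ℝ) :
    DA A l * ((1/2 : ℂ) • !![-1, l * (m:ℂ); -(l * (m:ℂ)), 1]) * EA A l
      = (-(Complex.I * kA A l * (m:ℂ) / 2)) • sigma3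
        + ((l * ((m:ℂ) - (A:ℂ)) / (2 * (A:ℂ) * kA A l)) • sigma2
           + (((m:ℂ) - (A:ℂ)) / (2 * Complex.I * (A:ℂ)^2 * kA A l)) • sigma3) := by
  have hU : (1/2 : ℂ) • !![-1, l * (m:ℂ); -(l * (m:ℂ)), 1]
      = (-1/2 : ℂ) • sigma3 + (Complex.I * l * m / 2) • sigma2 := by
    ext i j
    fin_cases i <;> fin_cases j <;> simp [sigma2, sigma3] <;>
      ring_nf <;> simp only [Complex.I_sq] <;> ring
  rw [DA_eq, EA_eq, hU, smul_mul_assoc, smul_mul_assoc, mul_smul_comm, smul_smul,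
    smul_one_sub_sigma1_mul_mul_smul_one_add_sigma1, smul_add, smul_smul, smul_smul]
  rw [← sq, cA_sq, aA_sq_add_one hA, add_comm (_ • sigma2), ← add_assoc, ← add_smul, aA]
  have hk := kA_ne_zero hl
  have hd := one_sub_I_mul_kA_ne_zero hA l
  have hA0 : (A:ℂ) ≠ 0 := by exact_mod_cast hA.ne'
  congr 2
  · field_simp
    linear_combination Complex.I ^ 2 * m * ofReal_sq_mul_kA_sq A l hA0 - m * Complex.I_sq
  · field_simp
    ring
end

section
/- For every A > 0 and every λ ∈ ℂ ∖ Σ_A one has conj(E_A(λ̄)) = −E_A(λ), where λ̄ is the complex conjugate of λ and conj denotes entrywise complex conjugation of the matrix. -/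
open Complex Matrix MeasureTheory Filter

/-!
Away from the negative real axis the principal square root commutes with conjugation, so
`conj (kA A (conj λ)) = -kA A λ` because `I` changes sign, and likewise
`conj (sB (conj w)) = -sB w`. The prefactor of `EA` therefore changes sign while the matrix
entries are conjugation-symmetric. The one point needing `A > 0` is that the argument of `sB`
stays off the branch cut: `I * A * kA A λ = -A * csqrt (1/A² - λ²)` has nonpositive real part,
so `1 - 1/(I * A * kA A λ)` has real part at least `1`.
-/

open ComplexConjugate

lemma arg_ne_pi_of_re_nonneg {z : ℂ} (hz : 0 ≤ z.re) : z.arg ≠ Real.pi := fun h =>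
  (arg_eq_pi_iff.mp h).1.not_ge hz

lemma arg_conj_ne_pi {z : ℂ} (hz : z.arg ≠ Real.pi) : (conj z).arg ≠ Real.pi := by
  rw [Ne, arg_eq_pi_iff] at hz ⊢
  simpa using hz

lemma conj_csqrt {z : ℂ} (hz : z.arg ≠ Real.pi) : conj (csqrt z) = csqrt (conj z) := by
  have h := conj_cpow z (1/2 : ℂ) hz
  simp only [map_div₀, map_one, map_ofNat] at h
  rw [csqrt, csqrt, h]

lemma re_csqrt_nonneg (z : ℂ) : 0 ≤ (csqrt z).re := by
  rcases eq_or_ne z 0 with rfl | hz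
  · simp [csqrt]
  rw [csqrt, cpow_def_of_ne_zero hz, exp_re]
  refine mul_nonneg (Real.exp_pos _).le (Real.cos_nonneg_of_mem_Icc ?_)
  have him : (log z * (1/2)).im = z.arg / 2 := by simp [log_im]; ring
  rw [him]
  constructor <;> linarith [neg_pi_lt_arg z, arg_le_pi z]

lemma conj_sB_conj {w : ℂ} (hw : (-w).arg ≠ Real.pi) : conj (sB (conj w)) = -sB w := by
  rw [sB, sB, map_mul, conj_I, ← map_neg, conj_csqrt (arg_conj_ne_pi hw), conj_conj]
  ring

lemma mem_SigmaSet_of_sq_lt {A x : ℝ} (hx : (1/A)^2 < x^2) : (x : ℂ) ∈ SigmaSet A := by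
  refine ⟨x, ?_, rfl⟩
  rcases lt_abs.mp (sq_lt_sq.mp hx) with h | h
  · exact Or.inr ((le_abs_self (1/A)).trans h.le)
  · exact Or.inl (show x ≤ -(1/A) by linarith [le_abs_self (1/A)])

lemma arg_inv_sq_sub_sq_ne_pi {A : ℝ} {l : ℂ} (hl : l ∉ SigmaSet A) :
    (1/(A:ℂ)^2 - l^2).arg ≠ Real.pi := by
  rw [Ne, arg_eq_pi_iff]
  have hcast : 1/(A:ℂ)^2 = (((1/A)^2 : ℝ) : ℂ) := by push_cast; ring
  rw [hcast]
  rintro ⟨hre, him⟩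
  have hre' : (1/A)^2 - (l.re^2 - l.im^2) < 0 := by
    simpa only [sub_re, ofReal_re, pow_two, mul_re] using hre
  have him' : l.re * l.im = 0 := by
    simp only [sub_im, ofReal_im, pow_two, mul_im] at him
    linarith
  have hre0 : l.re ≠ 0 := by
    rintro h0
    nlinarith [sq_nonneg (1/A), sq_nonneg l.im]
  have him0 : l.im = 0 := (mul_eq_zero.mp him').resolve_left hre0
  refine hl ?_
  rw [← re_add_im l, him0, ofReal_zero, zero_mul, add_zero]
  exact mem_SigmaSet_of_sq_lt (by nlinarith)

lemma conj_kA_conj {A : ℝ} {l : ℂ} (hl : l ∉ SigmaSet A) : conj (kA A (conj l)) = -kA A l := by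
  have hconj : 1/(A:ℂ)^2 - (conj l)^2 = conj (1/(A:ℂ)^2 - l^2) := by simp
  rw [kA, kA, hconj, map_mul, conj_I, conj_csqrt (arg_conj_ne_pi (arg_inv_sq_sub_sq_ne_pi hl)),
    conj_conj]
  ring

lemma I_mul_mul_kA (A : ℝ) (l : ℂ) :
    I * A * kA A l = -(A * csqrt (1/(A:ℂ)^2 - l^2)) := by
  rw [kA]
  linear_combination (A * csqrt (1/(A:ℂ)^2 - l^2)) * I_mul_I

lemma arg_neg_inv_I_mul_kA_sub_one_ne_pi {A : ℝ} (hA : 0 < A) (l : ℂ) :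
    (-(1/(I * A * kA A l) - 1)).arg ≠ Real.pi := by
  set s := csqrt (1/(A:ℂ)^2 - l^2)
  have hrw : -(1/(I * A * kA A l) - 1) = 1 + ((A:ℂ) * s)⁻¹ := by
    rw [I_mul_mul_kA]
    ring
  have hre : 0 ≤ (((A:ℂ) * s)⁻¹).re := by
    rw [inv_re, re_ofReal_mul]
    exact div_nonneg (mul_nonneg hA.le (re_csqrt_nonneg _)) (normSq_nonneg _)
  rw [hrw]
  exact arg_ne_pi_of_re_nonneg (by rw [add_re, one_re]; linarith)

/-- conj(E_A(conj λ)) = −E_A(λ) (entrywise conjugation). -/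
theorem stmt_8 (A : ℝ) (hA : 0 < A) (l : ℂ) (hl : l ∉ SigmaSet A) :
    (EA A ((starRingEnd ℂ) l)).map (starRingEnd ℂ) = -(EA A l) := by
  have hIAk : conj (I * A * kA A (conj l)) = I * A * kA A l := by
    rw [map_mul, map_mul, conj_kA_conj hl, conj_I, conj_ofReal]
    ring
  have hentry : conj (conj l * A / (1 - I * A * kA A (conj l))) = l * A / (1 - I * A * kA A l) := by
    rw [map_div₀, map_mul, map_sub, hIAk, conj_conj, conj_ofReal, map_one]
  have hsB : conj (sB (1/(I * A * kA A (conj l)) - 1)) = -sB (1/(I * A * kA A l) - 1) := by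
    have hw : 1/(I * A * kA A (conj l)) - 1 = conj (1/(I * A * kA A l) - 1) := by
      rw [map_sub, map_div₀, map_one, ← hIAk, conj_conj]
    rw [hw, conj_sB_conj (arg_neg_inv_I_mul_kA_sub_one_ne_pi hA l)]
  have hscalar : conj ((√2 : ℂ)⁻¹ * sB (1/(I * A * kA A (conj l)) - 1))
      = -((√2 : ℂ)⁻¹ * sB (1/(I * A * kA A l) - 1)) := by
    rw [map_mul, map_inv₀, conj_ofReal, hsB, mul_neg]
  rw [EA, EA, Matrix.map_smul' _ _ _ (map_mul _), hscalar, neg_smul]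
  congr 2
  ext i j
  fin_cases i <;> fin_cases j <;> simp [hentry]
end
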